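/- Let f : ℝ → ℝ be continuous and q(a,b) = sign(a−b)(f(a)−f(b)). If u^l, u^r, û^l, û^r ∈ ℝ satisfy q(u^l,c) ≥ q(u^r,c) for all c ∈ ℝ and q(û^l,c) ≥ q(û^r,c) for all c ∈ ℝ, then q(u^l,û^l) ≥ q(u^r,û^r). Consequently the dual of the Volpert–Kruzhkov germ G_VKr = {(c,c) : c ∈ ℝ} is an L1-dissipative germ, and G_VKr is definite. -/
import Mathlib


noncomputable section

/-- Kruzhkov entropy flux `q(a,b) = sign(a-b)(f(a)-f(b))`. -/
def qflux (f : ℝ → ℝ) (a b : ℝ) : ℝ := Real.sign (a - b) * (f a - f b)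

/-- A germ: a set of pairs in `U × U` satisfying the Rankine–Hugoniot condition. -/
def IsGerm (U : Set ℝ) (fl fr : ℝ → ℝ) (G : Set (ℝ × ℝ)) : Prop :=
  G ⊆ U ×ˢ U ∧ ∀ p ∈ G, fl p.1 = fr p.2

/-- An L1-dissipative germ. -/
def IsL1D (U : Set ℝ) (fl fr : ℝ → ℝ) (G : Set (ℝ × ℝ)) : Prop :=
  IsGerm U fl fr G ∧ ∀ p ∈ G, ∀ p' ∈ G, qflux fr p.2 p'.2 ≤ qflux fl p.1 p'.1

/-- The dual germ `G*`. -/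
def dualGerm (U : Set ℝ) (fl fr : ℝ → ℝ) (G : Set (ℝ × ℝ)) : Set (ℝ × ℝ) :=
  {p | p ∈ U ×ˢ U ∧ fl p.1 = fr p.2 ∧
    ∀ p' ∈ G, qflux fr p'.2 p.2 ≤ qflux fl p'.1 p.1}

/-- A maximal L1-dissipative germ. -/
def MaximalL1D (U : Set ℝ) (fl fr : ℝ → ℝ) (G : Set (ℝ × ℝ)) : Prop :=
  IsL1D U fl fr G ∧ ∀ G', IsL1D U fl fr G' → G ⊆ G' → G' = G

/-- A definite germ: an L1D germ with a unique maximal L1D extension. -/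
def Definite (U : Set ℝ) (fl fr : ℝ → ℝ) (G : Set (ℝ × ℝ)) : Prop :=
  IsL1D U fl fr G ∧ ∃! M, MaximalL1D U fl fr M ∧ G ⊆ M

lemma rsign_le_one (x : ℝ) : Real.sign x ≤ 1 := by
  rcases Real.sign_apply_eq x with h | h | h <;> rw [h] <;> norm_num

lemma neg_one_le_rsign (x : ℝ) : -1 ≤ Real.sign x := by
  rcases Real.sign_apply_eq x with h | h | h <;> rw [h] <;> norm_num

lemma rsign_nonpos {x : ℝ} (h : x ≤ 0) : Real.sign x ≤ 0 := by
  rcases lt_or_eq_of_le h with h' | h'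
  · rw [Real.sign_of_neg h']; norm_num
  · rw [h', Real.sign_zero]

lemma rsign_nonneg {x : ℝ} (h : 0 ≤ x) : 0 ≤ Real.sign x := by
  rcases lt_or_eq_of_le h with h' | h'
  · rw [Real.sign_of_pos h']; norm_num
  · rw [← h', Real.sign_zero]

lemma qflux_symm (f : ℝ → ℝ) (a b : ℝ) : qflux f a b = qflux f b a := by
  unfold qflux
  rw [show a - b = -(b - a) by ring, Real.sign_neg]
  ring

lemma rh_of_qflux (f : ℝ → ℝ) (ul ur : ℝ)
    (h : ∀ c : ℝ, qflux f ur c ≤ qflux f ul c) : f ul = f ur := by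
  have hA := h (max ul ur + 1)
  have hB := h (min ul ur - 1)
  have hA1 : Real.sign (ur - (max ul ur + 1)) = -1 :=
    Real.sign_of_neg (by have := le_max_right ul ur; linarith)
  have hA2 : Real.sign (ul - (max ul ur + 1)) = -1 :=
    Real.sign_of_neg (by have := le_max_left ul ur; linarith)
  have hB1 : Real.sign (ur - (min ul ur - 1)) = 1 :=
    Real.sign_of_pos (by have := min_le_right ul ur; linarith)
  have hB2 : Real.sign (ul - (min ul ur - 1)) = 1 :=
    Real.sign_of_pos (by have := min_le_left ul ur; linarith)
  unfold qflux at hA hB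
  rw [hA1, hA2] at hA
  rw [hB1, hB2] at hB
  linarith

/-- Key half of the main inequality: assuming `f hul < f ul`. -/
lemma key_qflux (f : ℝ → ℝ) (ul ur hul hur : ℝ)
    (hrh1 : f ul = f ur) (hrh2 : f hul = f hur)
    (h1 : ∀ c : ℝ, qflux f ur c ≤ qflux f ul c)
    (h2 : ∀ c : ℝ, qflux f hur c ≤ qflux f hul c)
    (hst : f hul < f ul) :
    qflux f ur hur ≤ qflux f ul hul := by
  unfold qflux
  rw [← hrh1, ← hrh2]
  have hpos : 0 < f ul - f hul := by linarith
  rcases le_or_gt (Real.sign (ur - hur)) (Real.sign (ul - hul)) with hle | hlt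
  · exact mul_le_mul_of_nonneg_right hle hpos.le
  · exfalso
    -- from the strict sign inequality: ul ≤ hul and hur ≤ ur
    have hul_le : ul ≤ hul := by
      by_contra hc
      push_neg at hc
      rw [Real.sign_of_pos (show (0:ℝ) < ul - hul by linarith)] at hlt
      exact absurd (rsign_le_one (ur - hur)) (not_le.mpr hlt)
    have hur_ge : hur ≤ ur := by
      by_contra hc
      push_neg at hc
      rw [Real.sign_of_neg (show ur - hur < 0 by linarith)] at hlt
      exact absurd (neg_one_le_rsign (ul - hul)) (not_le.mpr hlt)
    -- step 1: ur ≤ hul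
    have s1 := h1 hul
    unfold qflux at s1
    rw [← hrh1] at s1
    have e1 : Real.sign (ul - hul) * (f ul - f hul) ≤ 0 :=
      mul_nonpos_of_nonpos_of_nonneg (rsign_nonpos (by linarith)) hpos.le
    have h3 : Real.sign (ur - hul) * (f ul - f hul) ≤ 0 := le_trans s1 e1
    have hurhul : ur ≤ hul := by
      by_contra hc
      push_neg at hc
      rw [Real.sign_of_pos (show (0:ℝ) < ur - hul by linarith), one_mul] at h3
      linarith
    -- step 2: ur ≤ hur
    have s2 := h2 ur
    unfold qflux at s2
    rw [← hrh2, ← hrh1] at s2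
    have e2 : Real.sign (hul - ur) * (f hul - f ul) ≤ 0 :=
      mul_nonpos_of_nonneg_of_nonpos (rsign_nonneg (by linarith)) (by linarith)
    have h4 : Real.sign (hur - ur) * (f hul - f ul) ≤ 0 := le_trans s2 e2
    have hurhur : ur ≤ hur := by
      by_contra hc
      push_neg at hc
      rw [Real.sign_of_neg (show hur - ur < 0 by linarith)] at h4
      have : f ul - f hul ≤ 0 := by linarith
      linarith
    have : ur = hur := le_antisymm hurhur hur_ge
    rw [hrh1, hrh2, ← this] at hst
    exact lt_irrefl _ hst

/-- Main lemma: the pairwise dissipation inequality. -/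
lemma main_qflux (f : ℝ → ℝ) (ul ur hul hur : ℝ)
    (h1 : ∀ c : ℝ, qflux f ur c ≤ qflux f ul c)
    (h2 : ∀ c : ℝ, qflux f hur c ≤ qflux f hul c) :
    qflux f ur hur ≤ qflux f ul hul := by
  have hrh1 := rh_of_qflux f ul ur h1
  have hrh2 := rh_of_qflux f hul hur h2
  rcases lt_trichotomy (f hul) (f ul) with h | h | h
  · exact key_qflux f ul ur hul hur hrh1 hrh2 h1 h2 h
  · unfold qflux
    rw [← hrh1, ← hrh2, h]
    simp
  · have := key_qflux f hul hur ul ur hrh2 hrh1 h2 h1 h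
    rw [qflux_symm f hur ur, qflux_symm f hul ul] at this
    exact this

theorem volpert_kruzhkov_dual_L1D_and_definite
    (f : ℝ → ℝ) (hf : Continuous f)
    (ul ur hul hur : ℝ)
    (h1 : ∀ c : ℝ, qflux f ur c ≤ qflux f ul c)
    (h2 : ∀ c : ℝ, qflux f hur c ≤ qflux f hul c) :
    qflux f ur hur ≤ qflux f ul hul ∧
    IsL1D Set.univ f f (dualGerm Set.univ f f {p : ℝ × ℝ | p.1 = p.2}) ∧
    Definite Set.univ f f {p : ℝ × ℝ | p.1 = p.2} := by
  set G : Set (ℝ × ℝ) := {p : ℝ × ℝ | p.1 = p.2} with hG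
  set D := dualGerm Set.univ f f G with hD
  -- membership in the dual germ gives the pointwise condition
  have hmemD : ∀ p : ℝ × ℝ, p ∈ D ↔ f p.1 = f p.2 ∧ ∀ c : ℝ, qflux f p.2 c ≤ qflux f p.1 c := by
    intro p
    constructor
    · rintro ⟨-, hrh, hq⟩
      refine ⟨hrh, fun c => ?_⟩
      have := hq (c, c) rfl
      rw [qflux_symm f c p.2, qflux_symm f c p.1] at this
      exact this
    · rintro ⟨hrh, hq⟩
      refine ⟨⟨trivial, trivial⟩, hrh, ?_⟩
      rintro ⟨c, c'⟩ (hc : c = c')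
      subst hc
      simpa [qflux_symm f c p.2, qflux_symm f c p.1] using hq c
  have hDL1D : IsL1D Set.univ f f D := by
    refine ⟨⟨fun p _ => ⟨trivial, trivial⟩, fun p hp => ((hmemD p).mp hp).1⟩, ?_⟩
    intro p hp p' hp'
    obtain ⟨_, hq⟩ := (hmemD p).mp hp
    obtain ⟨_, hq'⟩ := (hmemD p').mp hp'
    exact main_qflux f p.1 p.2 p'.1 p'.2 hq hq'
  have hGsubD : G ⊆ D := by
    rintro ⟨c, c'⟩ (hc : c = c')
    subst hc
    exact (hmemD (c, c)).mpr ⟨rfl, fun _ => le_refl _⟩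
  -- any L1D germ containing G is contained in D
  have hsubD : ∀ G', IsL1D Set.univ f f G' → G ⊆ G' → G' ⊆ D := by
    intro G' ⟨⟨_, hrh'⟩, hq'⟩ hGG' p hp
    refine (hmemD p).mpr ⟨hrh' p hp, fun c => ?_⟩
    exact hq' p hp (c, c) (hGG' rfl)
  have hDmax : MaximalL1D Set.univ f f D := by
    refine ⟨hDL1D, fun G' hG' hDG' => ?_⟩
    exact le_antisymm (hsubD G' hG' (hGsubD.trans hDG')) hDG'
  refine ⟨main_qflux f ul ur hul hur h1 h2, hDL1D, ?_, ?_⟩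
  · refine ⟨⟨fun p _ => ⟨trivial, trivial⟩, fun p hp => by rw [hp]⟩, ?_⟩
    rintro ⟨a, a'⟩ (ha : a = a') ⟨b, b'⟩ (hb : b = b')
    subst ha; subst hb
    exact le_refl _
  · refine ⟨D, ⟨hDmax, hGsubD⟩, ?_⟩
    rintro M ⟨⟨hML1D, hMmax⟩, hGM⟩
    exact (hMmax D hDL1D (hsubD M hML1D hGM)).symm
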